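/- Let q be real with |q| > 1/2, a = 1/(2q), N ∈ ℕ, l = 2^N, R = (2q)^{N−1}. Then for every j with 0 ≤ j ≤ 2^{N−1}, setting t_j = j/2^{N−1}, it holds that (S_q(t_j · l) − t_j · S_q(l))/R = −q · T_a(t_j). -/

import Mathlib

open scoped BigOperators

/-- distance from `x` to the nearest integer -/
noncomputable def tau (x : ℝ) : ℝ := |x - round x|

/-- q-weighted binary digit sum: `s_q(n) = Σ ω_i q^(i+1)` -/
noncomputable def sdigq (q : ℝ) (n : ℕ) : ℝ :=
  ∑ i ∈ Finset.range n, if n.testBit i then q ^ (i + 1) else 0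

/-- `S_q(n) = Σ_{k<n} s_q(k)` -/
noncomputable def Sdigq (q : ℝ) (n : ℕ) : ℝ := ∑ k ∈ Finset.range n, sdigq q k

/-- Takagi–Landsberg function -/
noncomputable def Ta (a x : ℝ) : ℝ := ∑' n : ℕ, a ^ n * tau (2 ^ n * x)

/-!
The number of `k < n` whose `i`-th binary digit is `1` equals `n / 2 - 2 ^ i * τ (n / 2 ^ (i + 1))`:
as `n` increases by one, `2 ^ (i + 1) * τ (n / 2 ^ (i + 1))` goes up while that digit of `n` is
`0` and down while it is `1`. Weighting these counts by `q ^ (i + 1)` writes `S_q(n)` through `τ`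
at the points `n / 2 ^ (i + 1)`. For `n = 2 j` and `n = 2 ^ N` the linear parts cancel in
`S_q(t l) - t S_q(l)`; after reversing the order of summation the rest is `-q` times the partial
sum `∑_{n < N} a ^ n τ (2 ^ n t)`, which is all of `T_a(t)` since `2 ^ n t` is an integer for
`n ≥ N - 1`.
-/

open Finset

theorem Nat.testBit_eq_decide_two_pow_le_mod (n i : ℕ) :
    n.testBit i = decide (2 ^ i ≤ n % 2 ^ (i + 1)) := by
  have hdiv : n % 2 ^ (i + 1) / 2 ^ i = n / 2 ^ i % 2 := by
    rw [pow_succ, Nat.mod_mul_right_div_self]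
  have hlt : n % 2 ^ (i + 1) / 2 ^ i < 2 := by
    rw [Nat.div_lt_iff_lt_mul (by positivity)]
    exact (Nat.mod_lt _ (by positivity)).trans_eq (by ring)
  have hle : 1 ≤ n % 2 ^ (i + 1) / 2 ^ i ↔ 2 ^ i ≤ n % 2 ^ (i + 1) := by
    rw [Nat.le_div_iff_mul_le (by positivity), one_mul]
  rw [Nat.testBit_eq_decide_div_mod_eq, ← hdiv, decide_eq_decide]
  omega

theorem two_mul_card_testBit_add_min (n i : ℕ) :
    2 * #{k ∈ range n | k.testBit i} + min (n % 2 ^ (i + 1)) (2 ^ (i + 1) - n % 2 ^ (i + 1))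
      = n := by
  induction n with
  | zero => simp
  | succ n ih =>
    have hP : 2 ^ (i + 1) = 2 * 2 ^ i := by ring
    have hr : n % 2 ^ (i + 1) < 2 ^ (i + 1) := Nat.mod_lt _ (by positivity)
    have hsucc : (n + 1) % 2 ^ (i + 1) = if 2 ^ (i + 1) ≤ n % 2 ^ (i + 1) + 1
        then n % 2 ^ (i + 1) + 1 - 2 ^ (i + 1) else n % 2 ^ (i + 1) + 1 := by
      rw [Nat.add_mod_eq_ite, Nat.one_mod_eq_one.2 (Nat.one_lt_two_pow (by omega)).ne']
    rw [range_add_one, filter_insert, Nat.testBit_eq_decide_two_pow_le_mod, hsucc]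
    by_cases hbit : 2 ^ i ≤ n % 2 ^ (i + 1)
    · rw [if_pos (decide_eq_true hbit), card_insert_of_notMem (by simp)]
      split_ifs <;> omega
    · rw [if_neg (by simpa using hbit)]
      split_ifs <;> omega

theorem tau_natCast (n : ℕ) : tau n = 0 := by simp [tau]

theorem card_testBit_eq (n i : ℕ) :
    (#{k ∈ range n | k.testBit i} : ℝ) = n / 2 - 2 ^ i * tau (n / 2 ^ (i + 1)) := by
  have htau : tau (n / 2 ^ (i + 1))
      = (min (n % 2 ^ (i + 1)) (2 ^ (i + 1) - n % 2 ^ (i + 1)) : ℕ) / 2 ^ (i + 1) := by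
    exact_mod_cast abs_sub_round_div_natCast_eq
  have hcount : (n : ℝ) = 2 * #{k ∈ range n | k.testBit i}
      + (min (n % 2 ^ (i + 1)) (2 ^ (i + 1) - n % 2 ^ (i + 1)) : ℕ) := by
    exact_mod_cast (two_mul_card_testBit_add_min n i).symm
  rw [htau, show (2 : ℝ) ^ (i + 1) = 2 * 2 ^ i by ring]
  field_simp
  linarith

theorem sdigq_eq_sum_range (q : ℝ) {k L : ℕ} (hk : k < 2 ^ L) :
    sdigq q k = ∑ i ∈ range L, if k.testBit i then q ^ (i + 1) else 0 := by
  have hvanish : ∀ m, Nat.size k ≤ m →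
      ∑ i ∈ range m, (if k.testBit i then q ^ (i + 1) else 0)
        = ∑ i ∈ range (Nat.size k), if k.testBit i then q ^ (i + 1) else 0 := by
    intro m hm
    rw [← sum_range_add_sum_Ico _ hm, add_eq_left]
    refine sum_eq_zero fun i hi => ?_
    rw [Nat.testBit_eq_false_of_lt ((Nat.size_le.1 (mem_Ico.1 hi).1)), if_neg Bool.false_ne_true]
  rw [sdigq, hvanish L (Nat.size_le.2 hk), hvanish k (Nat.size_le.2 k.lt_two_pow_self)]

theorem Sdigq_eq_sum_range (q : ℝ) {n L : ℕ} (hn : n ≤ 2 ^ L) :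
    Sdigq q n = ∑ i ∈ range L, q ^ (i + 1) * (n / 2 - 2 ^ i * tau (n / 2 ^ (i + 1))) := by
  calc Sdigq q n
      = ∑ k ∈ range n, ∑ i ∈ range L, if k.testBit i then q ^ (i + 1) else 0 :=
        sum_congr rfl fun k hk => sdigq_eq_sum_range q ((mem_range.1 hk).trans_le hn)
    _ = ∑ i ∈ range L, q ^ (i + 1) * #{k ∈ range n | k.testBit i} := by
        rw [sum_comm]
        refine sum_congr rfl fun i _ => ?_
        rw [← sum_filter, sum_const, nsmul_eq_mul, mul_comm]
    _ = _ := by simp only [card_testBit_eq]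

theorem tau_two_pow_div_two_pow {m n : ℕ} (h : n ≤ m) : tau (2 ^ m / 2 ^ n) = 0 := by
  rw [div_eq_mul_inv, ← pow_sub₀ _ two_ne_zero h]
  exact_mod_cast tau_natCast (2 ^ (m - n))

theorem Sdigq_two_mul_sub (q : ℝ) {j M : ℕ} (hj : j ≤ 2 ^ M) :
    Sdigq q (2 * j) - (j / 2 ^ M) * Sdigq q (2 ^ (M + 1))
      = -∑ i ∈ range (M + 1), 2 ^ i * q ^ (i + 1) * tau (j / 2 ^ i) := by
  rw [Sdigq_eq_sum_range q (L := M + 1) (by rw [pow_succ]; omega),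
    Sdigq_eq_sum_range q le_rfl, mul_sum, ← sum_sub_distrib, ← sum_neg_distrib]
  refine sum_congr rfl fun i hi => ?_
  have hiM : i ≤ M := Nat.lt_succ_iff.1 (mem_range.1 hi)
  rw [Nat.cast_pow, Nat.cast_ofNat, tau_two_pow_div_two_pow (by omega),
    show ((2 * j : ℕ) : ℝ) / 2 ^ (i + 1) = j / 2 ^ i by push_cast; rw [pow_succ]; field_simp]
  field_simp
  push_cast
  ring

theorem Ta_div_two_pow_eq_sum_range (a : ℝ) (j : ℕ) {M L : ℕ} (hML : M ≤ L) :
    Ta a (j / 2 ^ M) = ∑ n ∈ range L, a ^ n * tau (2 ^ n * (j / 2 ^ M)) := by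
  refine tsum_eq_sum fun n hn => ?_
  have hMn : M ≤ n := hML.trans (by simpa using hn)
  have hint : (2 : ℝ) ^ n * (j / 2 ^ M) = (2 ^ (n - M) * j : ℕ) := by
    push_cast
    rw [pow_sub₀ _ two_ne_zero hMn]
    ring
  rw [hint, tau_natCast, mul_zero]

theorem limiting_curve (q : ℝ) (hq : 1/2 < |q|) (N : ℕ) (hN : 1 ≤ N)
    (j : ℕ) (hj : j ≤ 2 ^ (N - 1)) :
    (Sdigq q (2 * j) - ((j : ℝ) / 2 ^ (N - 1)) * Sdigq q (2 ^ N)) / (2 * q) ^ (N - 1)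
      = -q * Ta (1/(2*q)) ((j : ℝ) / 2 ^ (N - 1)) := by
  have hq0 : q ≠ 0 := by
    rintro rfl
    norm_num at hq
  obtain ⟨M, rfl⟩ : ∃ M, N = M + 1 := ⟨N - 1, by omega⟩
  rw [Nat.add_sub_cancel] at hj ⊢
  rw [Sdigq_two_mul_sub q hj, Ta_div_two_pow_eq_sum_range _ j (Nat.le_succ M),
    ← sum_range_reflect, mul_sum, neg_div, sum_div, ← sum_neg_distrib]
  refine sum_congr rfl fun i hi => ?_
  have hiM : i ≤ M := Nat.lt_succ_iff.1 (mem_range.1 hi)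
  have harg : (2 : ℝ) ^ i * (j / 2 ^ M) = j / 2 ^ (M - i) := by
    rw [← pow_sub_mul_pow 2 hiM]
    field_simp
  rw [Nat.add_sub_cancel, harg, ← pow_sub_mul_pow (2 * q) hiM, one_div_pow]
  field_simp
  ring
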